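/- For the exclusion game constructed from dual-feasible operators: (i) 0 ≤ G_y(η) ≤ 1/2 for every state η, each Ψ_{b|y} is a subchannel, and ∑_{b=1}^{l+1} Ψ_{b|y} is trace-preserving for every y, so (p, Ψ_{B|Y}) is a well-defined multi-object subchannel game; and (ii) inf_{σ ∈ F, ℕ_{A|X} ∈ 𝔽(l,κ)} P^E_err(p, Ψ_{B|Y}, σ, ℕ_{A|X}) ≥ β. -/

import Mathlib

open scoped BigOperators ComplexOrder Matrix

noncomputable section

namespace MultiObject

abbrev Mat (d : ℕ) := Matrix (Fin d) (Fin d) ℂ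

/-- A quantum state: positive semidefinite with unit trace. -/
def IsState {d : ℕ} (ρ : Mat d) : Prop := ρ.PosSemidef ∧ ρ.trace = 1

/-- A POVM set `M x a` indexed by input `x : Fin κ` and outcome `a : Fin l`. -/
def IsPOVMSet {d l κ : ℕ} (M : Fin κ → Fin l → Mat d) : Prop :=
  (∀ x a, (M x a).PosSemidef) ∧ (∀ x, ∑ a, M x a = 1)

/-- A probability mass function on a finite type. -/
def IsPMF {n : ℕ} (p : Fin n → ℝ) : Prop := (∀ i, 0 ≤ p i) ∧ ∑ i, p i = 1

/-- Simulability of the POVM set `N` by the POVM set `M` via classical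
pre- and post-processing. -/
def Simulable {d l κ m τ : ℕ} (N : Fin τ → Fin m → Mat d)
    (M : Fin κ → Fin l → Mat d) : Prop :=
  ∃ (nz : ℕ) (q : Fin nz → ℝ) (r : Fin τ → Fin nz → Fin κ → ℝ)
    (s : Fin τ → Fin nz → Fin l → Fin m → ℝ),
    IsPMF q ∧ (∀ y z, IsPMF (r y z)) ∧ (∀ y z a, IsPMF (s y z a)) ∧
    ∀ y b, N y b = ∑ z, ∑ x, ∑ a, (q z * r y z x * s y z a b) • M x a

/-- Compatibility (joint measurability) of a POVM set. -/
def Compatible {d l κ : ℕ} (M : Fin κ → Fin l → Mat d) : Prop :=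
  ∃ (nl : ℕ) (G : Fin nl → Mat d) (pc : Fin κ → Fin nl → Fin l → ℝ),
    (∀ i, (G i).PosSemidef) ∧ (∑ i, G i = 1) ∧ (∀ x lam, IsPMF (pc x lam)) ∧
    ∀ x a, M x a = ∑ lam, pc x lam a • G lam

/-- A subchannel: positive and trace-nonincreasing on PSD matrices. -/
def IsSubchannel {d : ℕ} (φ : Mat d →ₗ[ℂ] Mat d) : Prop :=
  (∀ A : Mat d, A.PosSemidef → (φ A).PosSemidef) ∧
  (∀ A : Mat d, A.PosSemidef → ((φ A).trace).re ≤ (A.trace).re)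

/-- An instrument: subchannels summing to a trace-preserving map. -/
def IsInstrument {d m : ℕ} (Φ : Fin m → (Mat d →ₗ[ℂ] Mat d)) : Prop :=
  (∀ b, IsSubchannel (Φ b)) ∧ (∀ A : Mat d, Matrix.trace (∑ b, Φ b A) = Matrix.trace A)

/-- A multi-object subchannel game: a PMF `p` with positive weights and a
family of instruments with common outcome set. -/
def IsGame {d m τ : ℕ} (p : Fin τ → ℝ) (Φ : Fin τ → Fin m → (Mat d →ₗ[ℂ] Mat d)) : Prop :=
  IsPMF p ∧ (∀ y, 0 < p y) ∧ (∀ y, IsInstrument (Φ y))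

/-- The value `∑_{b,y} tr[N_{b|y} φ_{b|y}(ρ)] p(y)`. -/
def gameValue {d m τ : ℕ} (p : Fin τ → ℝ) (Φ : Fin τ → Fin m → (Mat d →ₗ[ℂ] Mat d))
    (ρ : Mat d) (N : Fin τ → Fin m → Mat d) : ℝ :=
  ∑ y, ∑ b, p y * (Matrix.trace (N y b * Φ y b ρ)).re

/-- Success probability for discrimination. -/
def PsuccD {d l κ m τ : ℕ} (p : Fin τ → ℝ) (Φ : Fin τ → Fin m → (Mat d →ₗ[ℂ] Mat d))
    (ρ : Mat d) (M : Fin κ → Fin l → Mat d) : ℝ :=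
  sSup {v : ℝ | ∃ N : Fin τ → Fin m → Mat d, Simulable N M ∧ v = gameValue p Φ ρ N}

/-- Error probability for exclusion. -/
def PerrE {d l κ m τ : ℕ} (p : Fin τ → ℝ) (Φ : Fin τ → Fin m → (Mat d →ₗ[ℂ] Mat d))
    (ρ : Mat d) (M : Fin κ → Fin l → Mat d) : ℝ :=
  sInf {v : ℝ | ∃ N : Fin τ → Fin m → Mat d, Simulable N M ∧ v = gameValue p Φ ρ N}

/-- Free (normalised) states of a cone `𝓕`. -/
def freeStates {d : ℕ} (𝓕 : Set (Mat d)) : Set (Mat d) := {σ ∈ 𝓕 | Matrix.trace σ = 1}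

/-- Feasible set for the generalised robustness of a state. -/
def RFSet {d : ℕ} (F : Set (Mat d)) (ρ : Mat d) : Set ℝ :=
  {r : ℝ | 0 ≤ r ∧ ∃ ρG σ : Mat d, IsState ρG ∧ σ ∈ F ∧ ρ + r • ρG = (1 + r) • σ}

/-- Generalised robustness of a state. -/
def RF {d : ℕ} (F : Set (Mat d)) (ρ : Mat d) : ℝ := sInf (RFSet F ρ)

/-- Feasible set for the weight of resource of a state. -/
def WFSet {d : ℕ} (F : Set (Mat d)) (ρ : Mat d) : Set ℝ :=
  {w : ℝ | 0 ≤ w ∧ w ≤ 1 ∧ ∃ ρG σ : Mat d, IsState ρG ∧ σ ∈ F ∧ ρ = w • ρG + (1 - w) • σ}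

/-- Weight of resource of a state. -/
def WF {d : ℕ} (F : Set (Mat d)) (ρ : Mat d) : ℝ := sInf (WFSet F ρ)

/-- Feasible set for the generalised robustness of a POVM set. -/
def RFMSet {d l κ : ℕ} (𝔽 : Set (Fin κ → Fin l → Mat d))
    (M : Fin κ → Fin l → Mat d) : Set ℝ :=
  {r : ℝ | 0 ≤ r ∧ ∃ G Ff : Fin κ → Fin l → Mat d, IsPOVMSet G ∧ Ff ∈ 𝔽 ∧
     ∀ x a, M x a + r • G x a = (1 + r) • Ff x a}

/-- Generalised robustness of a POVM set. -/
def RFM {d l κ : ℕ} (𝔽 : Set (Fin κ → Fin l → Mat d)) (M : Fin κ → Fin l → Mat d) : ℝ :=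
  sInf (RFMSet 𝔽 M)

/-- Feasible set for the weight of resource of a POVM set. -/
def WFMSet {d l κ : ℕ} (𝔽 : Set (Fin κ → Fin l → Mat d))
    (M : Fin κ → Fin l → Mat d) : Set ℝ :=
  {w : ℝ | 0 ≤ w ∧ w ≤ 1 ∧ ∃ G Ff : Fin κ → Fin l → Mat d, IsPOVMSet G ∧ Ff ∈ 𝔽 ∧
     ∀ x a, M x a = w • G x a + (1 - w) • Ff x a}

/-- Weight of resource of a POVM set. -/
def WFM {d l κ : ℕ} (𝔽 : Set (Fin κ → Fin l → Mat d)) (M : Fin κ → Fin l → Mat d) : ℝ :=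
  sInf (WFMSet 𝔽 M)

/-- Conic hull of a set in a real module. -/
def conicHull {α : Type*} [AddCommMonoid α] [Module ℝ α] (S : Set α) : Set α :=
  {A | ∃ (n : ℕ) (c : Fin n → ℝ) (f : Fin n → α),
    (∀ i, 0 ≤ c i) ∧ (∀ i, f i ∈ S) ∧ A = ∑ i, c i • f i}

/-- `𝓕` is a closed convex cone of PSD matrices with at least one free state. -/
def IsFreeStateCone {d : ℕ} (𝓕 : Set (Mat d)) : Prop :=
  (∀ A ∈ 𝓕, Matrix.PosSemidef A) ∧
  (∀ A ∈ 𝓕, ∀ c : ℝ, 0 ≤ c → c • A ∈ 𝓕) ∧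
  (∀ A ∈ 𝓕, ∀ B ∈ 𝓕, A + B ∈ 𝓕) ∧
  IsClosed 𝓕 ∧ (freeStates 𝓕).Nonempty

/-- `𝔽` is a set of POVM sets whose conic hull is closed. -/
def GoodPOVMFree {d l κ : ℕ} (𝔽 : Set (Fin κ → Fin l → Mat d)) : Prop :=
  (∀ M ∈ 𝔽, IsPOVMSet M) ∧ IsClosed (conicHull 𝔽)

/-- The collection `𝔽` of free POVM sets is closed under simulability. -/
def ClosedUnderSim {d : ℕ} (𝔽 : ∀ l κ : ℕ, Set (Fin κ → Fin l → Mat d)) : Prop :=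
  ∀ {l κ m τ : ℕ} (M : Fin κ → Fin l → Mat d) (N : Fin τ → Fin m → Mat d),
    M ∈ 𝔽 l κ → Simulable N M → N ∈ 𝔽 m τ

/-- Best fully free success probability. -/
def Dbest {d l κ m τ : ℕ} (p : Fin τ → ℝ) (Φ : Fin τ → Fin m → (Mat d →ₗ[ℂ] Mat d))
    (F : Set (Mat d)) (𝔽 : Set (Fin κ → Fin l → Mat d)) : ℝ :=
  sSup {v : ℝ | ∃ (σ : Mat d) (N : Fin κ → Fin l → Mat d),
    σ ∈ F ∧ N ∈ 𝔽 ∧ v = PsuccD p Φ σ N}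

/-- Best fully free error probability. -/
def Ebest {d l κ m τ : ℕ} (p : Fin τ → ℝ) (Φ : Fin τ → Fin m → (Mat d →ₗ[ℂ] Mat d))
    (F : Set (Mat d)) (𝔽 : Set (Fin κ → Fin l → Mat d)) : ℝ :=
  sInf {v : ℝ | ∃ (σ : Mat d) (N : Fin κ → Fin l → Mat d),
    σ ∈ F ∧ N ∈ 𝔽 ∧ v = PerrE p Φ σ N}

/-- Operator norm of a PSD matrix via the variational characterisation
`‖Z‖_op = sup_{η state} tr[Z η]`. -/
def opNormPSD {d : ℕ} (Z : Mat d) : ℝ :=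
  sSup {v : ℝ | ∃ η : Mat d, IsState η ∧ v = (Matrix.trace (Z * η)).re}

/-- The linear map `η ↦ tr[Z η] • χ`. -/
def funMap {d : ℕ} (Z χ : Mat d) : Mat d →ₗ[ℂ] Mat d where
  toFun η := Matrix.trace (Z * η) • χ
  map_add' η₁ η₂ := by
    simp [Matrix.mul_add, add_smul]
  map_smul' c η := by
    simp [Matrix.mul_smul, smul_smul]

/-- The coefficient `α = 1/(‖Z^ρ‖_op ∑_{a,x} tr[Z_{a|x}] p(x)⁻¹)`. -/
def alphaConst {d l κ : ℕ} (Zr : Mat d) (Zm : Fin κ → Fin l → Mat d)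
    (p : Fin κ → ℝ) : ℝ :=
  (opNormPSD Zr * ∑ x, ∑ a, (Matrix.trace (Zm x a)).re / p x)⁻¹

/-- The function `F_y(η) = α tr[Z^ρ η] ∑_a tr[Z_{a|y}] p(y)⁻¹`. -/
def FyD {d l κ : ℕ} (Zr : Mat d) (Zm : Fin κ → Fin l → Mat d) (p : Fin κ → ℝ)
    (y : Fin κ) (η : Mat d) : ℝ :=
  alphaConst Zr Zm p * (Matrix.trace (Zr * η)).re * (∑ a, (Matrix.trace (Zm y a)).re) / p y

/-- The discrimination game built from dual-feasible operators. -/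
def discPsi {d l κ : ℕ} (Zr : Mat d) (Zm : Fin κ → Fin l → Mat d) (p : Fin κ → ℝ)
    (J : ℕ) (χ : Mat d) : Fin κ → Fin (l + J) → (Mat d →ₗ[ℂ] Mat d) :=
  fun y b =>
    if h : (b : ℕ) < l then
      (((alphaConst Zr Zm p) / p y : ℝ) : ℂ) • funMap Zr (Zm y ⟨b, h⟩)
    else
      ((J : ℂ))⁻¹ • (funMap 1 χ -
        (((alphaConst Zr Zm p) * (∑ a, (Matrix.trace (Zm y a)).re) / p y : ℝ) : ℂ) •
          funMap Zr χ)

/-- The coefficient `β = 1/(2‖Y^ρ‖_op ∑_{a,x} tr[Y_{a|x}] p(x)⁻¹)`. -/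
def betaConst {d l κ : ℕ} (Yr : Mat d) (Ym : Fin κ → Fin l → Mat d)
    (p : Fin κ → ℝ) : ℝ :=
  (2 * opNormPSD Yr * ∑ x, ∑ a, (Matrix.trace (Ym x a)).re / p x)⁻¹

/-- The function `G_y(η) = β tr[Y^ρ η] ∑_a tr[Y_{a|y}] p(y)⁻¹`. -/
def GyE {d l κ : ℕ} (Yr : Mat d) (Ym : Fin κ → Fin l → Mat d) (p : Fin κ → ℝ)
    (y : Fin κ) (η : Mat d) : ℝ :=
  betaConst Yr Ym p * (Matrix.trace (Yr * η)).re * (∑ a, (Matrix.trace (Ym y a)).re) / p y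

/-- The state `ξ_y = (∑_b p(b|y) Y_{b|y}) / (∑_b p(b|y) tr[Y_{b|y}])`. -/
def xiE {d l κ : ℕ} (Ym : Fin κ → Fin l → Mat d) (pc : Fin κ → Fin l → ℝ)
    (y : Fin κ) : Mat d :=
  ((∑ b, pc y b * (Matrix.trace (Ym y b)).re)⁻¹ : ℝ) • ∑ b, pc y b • Ym y b

/-- The exclusion game built from dual-feasible operators. -/
def exclPsi {d l κ : ℕ} (Yr : Mat d) (Ym : Fin κ → Fin l → Mat d) (p : Fin κ → ℝ)
    (pc : Fin κ → Fin l → ℝ) : Fin κ → Fin (l + 1) → (Mat d →ₗ[ℂ] Mat d) :=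
  fun y b =>
    if h : (b : ℕ) < l then
      ((betaConst Yr Ym p / p y : ℝ) : ℂ) • funMap Yr (Ym y ⟨b, h⟩)
    else
      funMap 1 (xiE Ym pc y) -
        ((betaConst Yr Ym p * (∑ a, (Matrix.trace (Ym y a)).re) / p y : ℝ) : ℂ) •
          funMap Yr (xiE Ym pc y)



lemma real_smul_mat {d : ℕ} (r : ℝ) (A : Mat d) : r • A = ((r : ℂ)) • A := by
  ext i j
  simp [Matrix.smul_apply, Complex.real_smul]

lemma psd_smul {d : ℕ} {A : Mat d} (hA : A.PosSemidef) {r : ℝ} (hr : 0 ≤ r) :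
    (((r : ℂ)) • A).PosSemidef := by
  constructor
  · unfold Matrix.IsHermitian
    rw [Matrix.conjTranspose_smul, hA.1.eq]
    congr 1
    simp [Complex.star_def, Complex.conj_ofReal]
  · exact (hA.smul (Complex.zero_le_real.mpr hr)).2

lemma psd_sum {d : ℕ} {ι : Type*} (s : Finset ι) (f : ι → Mat d)
    (h : ∀ i ∈ s, (f i).PosSemidef) : (∑ i ∈ s, f i).PosSemidef :=
  Finset.sum_induction f _ (fun _ _ ha hb => ha.add hb) Matrix.PosSemidef.zero h

lemma trace_conjT_mul_self {d : ℕ} (M : Mat d) :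
    Matrix.trace (Mᴴ * M) = ((∑ i, ∑ j, Complex.normSq (M i j) : ℝ) : ℂ) := by
  rw [Matrix.trace]
  push_cast
  rw [Finset.sum_comm]
  congr 1; ext i
  simp only [Matrix.diag_apply, Matrix.mul_apply, Matrix.conjTranspose_apply]
  congr 1; ext j
  rw [Complex.normSq_eq_conj_mul_self]
  rfl

lemma trace_mul_psd {d : ℕ} {A B : Mat d} (hA : A.PosSemidef) (hB : B.PosSemidef) :
    ∃ r : ℝ, 0 ≤ r ∧ r ≤ (Matrix.trace A).re * (Matrix.trace B).re ∧
      Matrix.trace (A * B) = (r : ℂ) := by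
  open MatrixOrder in
  obtain ⟨P, rfl⟩ := CStarAlgebra.nonneg_iff_eq_star_mul_self.mp hA.nonneg
  open MatrixOrder in
  obtain ⟨Q, rfl⟩ := CStarAlgebra.nonneg_iff_eq_star_mul_self.mp hB.nonneg
  simp only [Matrix.star_eq_conjTranspose]
  have key : Matrix.trace (Pᴴ * P * (Qᴴ * Q)) = Matrix.trace ((P * Qᴴ)ᴴ * (P * Qᴴ)) := by
    rw [Matrix.conjTranspose_mul, Matrix.conjTranspose_conjTranspose]
    rw [show Pᴴ * P * (Qᴴ * Q) = Pᴴ * (P * Qᴴ * Q) by simp [Matrix.mul_assoc]]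
    rw [Matrix.trace_mul_comm (Pᴴ), Matrix.mul_assoc, Matrix.trace_mul_comm]
  refine ⟨∑ i, ∑ j, Complex.normSq ((P * Qᴴ) i j), ?_, ?_, ?_⟩
  · exact Finset.sum_nonneg fun i _ => Finset.sum_nonneg fun j _ => Complex.normSq_nonneg _
  · have htA : (Matrix.trace (Pᴴ * P)).re = ∑ i, ∑ j, Complex.normSq (P i j) := by
      rw [trace_conjT_mul_self]; exact Complex.ofReal_re _
    have htB : (Matrix.trace (Qᴴ * Q)).re = ∑ i, ∑ j, Complex.normSq (Q i j) := by
      rw [trace_conjT_mul_self]; exact Complex.ofReal_re _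
    rw [htA, htB]
    have hfactor : (∑ i, ∑ j, Complex.normSq (P i j)) * (∑ i, ∑ j, Complex.normSq (Q i j))
        = ∑ i, ∑ j, (∑ k, Complex.normSq (P i k)) * (∑ k, Complex.normSq (Q j k)) :=
      Finset.sum_mul_sum _ _ _ _
    rw [hfactor]
    refine Finset.sum_le_sum fun i _ => ?_
    refine Finset.sum_le_sum fun j _ => ?_
    have hentry : (P * Qᴴ) i j = ∑ k, P i k * star (Q j k) := by
      simp [Matrix.mul_apply, Matrix.conjTranspose_apply]
    have habs : ‖(P * Qᴴ) i j‖ ≤ ∑ k, ‖P i k‖ * ‖Q j k‖ := by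
      rw [hentry]
      refine (norm_sum_le _ _).trans ?_
      refine le_of_eq (Finset.sum_congr rfl fun k _ => ?_)
      rw [norm_mul]
      congr 1
      exact norm_star _
    calc Complex.normSq ((P * Qᴴ) i j) = ‖(P * Qᴴ) i j‖ ^ 2 := by
          rw [Complex.sq_norm]
      _ ≤ (∑ k, ‖P i k‖ * ‖Q j k‖) ^ 2 := by
          exact pow_le_pow_left₀ (norm_nonneg _) habs 2
      _ ≤ (∑ k, ‖P i k‖ ^ 2) * ∑ k, ‖Q j k‖ ^ 2 :=
          Finset.sum_mul_sq_le_sq_mul_sq _ _ _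
      _ = (∑ k, Complex.normSq (P i k)) * ∑ k, Complex.normSq (Q j k) := by
          simp [Complex.sq_norm]
  · rw [key, trace_conjT_mul_self]

lemma psd_trace_re_eq {d : ℕ} {A : Mat d} (hA : A.PosSemidef) :
    Matrix.trace A = (((Matrix.trace A).re : ℝ) : ℂ) := by
  obtain ⟨r, _, _, hr⟩ := trace_mul_psd hA (Matrix.PosSemidef.one)
  rw [mul_one] at hr
  rw [hr, Complex.ofReal_re]

lemma psd_trace_nonneg {d : ℕ} {A : Mat d} (hA : A.PosSemidef) :
    0 ≤ (Matrix.trace A).re := by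
  obtain ⟨r, hr0, _, hr⟩ := trace_mul_psd hA (Matrix.PosSemidef.one)
  rw [mul_one] at hr
  rw [hr, Complex.ofReal_re]
  exact hr0

lemma trace_mul_psd_re_eq {d : ℕ} {A B : Mat d} (hA : A.PosSemidef) (hB : B.PosSemidef) :
    Matrix.trace (A * B) = (((Matrix.trace (A * B)).re : ℝ) : ℂ) := by
  obtain ⟨r, _, _, hr⟩ := trace_mul_psd hA hB
  rw [hr, Complex.ofReal_re]

lemma trace_mul_psd_nonneg {d : ℕ} {A B : Mat d} (hA : A.PosSemidef) (hB : B.PosSemidef) :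
    0 ≤ (Matrix.trace (A * B)).re := by
  obtain ⟨r, hr0, _, hr⟩ := trace_mul_psd hA hB
  rw [hr, Complex.ofReal_re]; exact hr0

lemma trace_mul_psd_le {d : ℕ} {A B : Mat d} (hA : A.PosSemidef) (hB : B.PosSemidef) :
    (Matrix.trace (A * B)).re ≤ (Matrix.trace A).re * (Matrix.trace B).re := by
  obtain ⟨r, _, hrle, hr⟩ := trace_mul_psd hA hB
  rw [hr, Complex.ofReal_re]; exact hrle


@[simp] lemma funMap_apply {d : ℕ} (Z χ η : Mat d) :
    funMap Z χ η = Matrix.trace (Z * η) • χ := rfl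

lemma opNorm_bddAbove {d : ℕ} {Z : Mat d} (hZ : Z.PosSemidef) :
    BddAbove {v : ℝ | ∃ η, IsState η ∧ v = (Matrix.trace (Z * η)).re} := by
  refine ⟨(Matrix.trace Z).re, ?_⟩
  rintro v ⟨η, hη, rfl⟩
  have h1 := trace_mul_psd_le hZ hη.1
  have htr : (Matrix.trace η).re = 1 := by rw [hη.2]; simp
  rw [htr, mul_one] at h1; exact h1

lemma le_opNormPSD {d : ℕ} {Z : Mat d} (hZ : Z.PosSemidef) {η : Mat d} (hη : IsState η) :
    (Matrix.trace (Z * η)).re ≤ opNormPSD Z :=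
  le_csSup (opNorm_bddAbove hZ) ⟨η, hη, rfl⟩

lemma trace_mul_le_opNorm {d : ℕ} {Z A : Mat d} (hZ : Z.PosSemidef) (hA : A.PosSemidef) :
    (Matrix.trace (Z * A)).re ≤ opNormPSD Z * (Matrix.trace A).re := by
  rcases eq_or_lt_of_le (psd_trace_nonneg hA) with h0 | hpos
  · have h1 := trace_mul_psd_le hZ hA
    rw [← h0, mul_zero] at h1 ⊢
    exact h1
  · set t := (Matrix.trace A).re with ht
    have hstate : IsState (((t⁻¹ : ℝ) : ℂ) • A) := by
      refine ⟨psd_smul hA (inv_nonneg.mpr hpos.le), ?_⟩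
      rw [Matrix.trace_smul, smul_eq_mul, psd_trace_re_eq hA, ← ht,
        ← Complex.ofReal_mul, inv_mul_cancel₀ hpos.ne']
      simp
    have h2 := le_opNormPSD hZ hstate
    rw [Matrix.mul_smul, Matrix.trace_smul, smul_eq_mul, Complex.re_ofReal_mul] at h2
    calc (Matrix.trace (Z * A)).re = t * (t⁻¹ * (Matrix.trace (Z * A)).re) := by
          field_simp
      _ ≤ t * opNormPSD Z := mul_le_mul_of_nonneg_left h2 hpos.le
      _ = opNormPSD Z * t := mul_comm _ _

lemma exclPsi_castSucc {d l κ : ℕ} (Yr : Mat d) (Ym : Fin κ → Fin l → Mat d)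
    (p : Fin κ → ℝ) (pc : Fin κ → Fin l → ℝ) (y : Fin κ) (i : Fin l) :
    exclPsi Yr Ym p pc y (Fin.castSucc i) =
      ((betaConst Yr Ym p / p y : ℝ) : ℂ) • funMap Yr (Ym y i) := by
  have h : ((Fin.castSucc i : Fin (l + 1)) : ℕ) < l := by simpa using i.isLt
  simp only [exclPsi, dif_pos h]
  congr 2

lemma exclPsi_last {d l κ : ℕ} (Yr : Mat d) (Ym : Fin κ → Fin l → Mat d)
    (p : Fin κ → ℝ) (pc : Fin κ → Fin l → ℝ) (y : Fin κ) :
    exclPsi Yr Ym p pc y (Fin.last l) =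
      funMap 1 (xiE Ym pc y) -
        ((betaConst Yr Ym p * (∑ a, (Matrix.trace (Ym y a)).re) / p y : ℝ) : ℂ) •
          funMap Yr (xiE Ym pc y) := by
  simp only [exclPsi, Fin.val_last, lt_irrefl, dif_neg, not_false_iff]

lemma simulable_extend {d l κ : ℕ} {N : Fin κ → Fin l → Mat d} (hN : IsPOVMSet N)
    (hκ : 0 < κ) : ∃ N' : Fin κ → Fin (l + 1) → Mat d, Simulable N' N := by
  classical
  refine ⟨fun y b => if b = 0 then (1 : Mat d) else 0, 1, fun _ => 1,
    fun y z x => if x = (⟨0, hκ⟩ : Fin κ) then 1 else 0,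
    fun y z a b => if b = 0 then 1 else 0, ⟨fun _ => one_pos.le, by simp⟩,
    fun y z => ⟨fun x => by positivity, by simp⟩,
    fun y z a => ⟨fun b => by positivity, by simp⟩, ?_⟩
  intro y b
  by_cases hb : b = 0 <;>
    simp [hb, ite_smul, mul_ite, Finset.sum_ite_eq', hN.2]

/-- the constructed exclusion game is a well-defined multi-object
subchannel game, and every fully free pair errs with probability at least `β`. -/
theorem excl_game_wellposed_and_free_bound {d l κ : ℕ} (hd : 1 ≤ d)
    (𝓕 : Set (Mat d)) (h𝓕 : IsFreeStateCone 𝓕)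
    (𝔽 : ∀ l κ : ℕ, Set (Fin κ → Fin l → Mat d))
    (h𝔽 : ∀ l κ : ℕ, GoodPOVMFree (𝔽 l κ))
    (h𝔽sim : ClosedUnderSim 𝔽) (h𝔽ne : (𝔽 l κ).Nonempty)
    (Yr : Mat d) (hYr : Yr.PosSemidef)
    (hYrF : ∀ σ ∈ freeStates 𝓕, 1 ≤ (Matrix.trace (Yr * σ)).re)
    (Ym : Fin κ → Fin l → Mat d) (hYm : ∀ x a, (Ym x a).PosSemidef)
    (hYmF : ∀ N ∈ 𝔽 l κ, 1 ≤ (∑ x, ∑ a, (Matrix.trace (Ym x a * N x a)).re))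
    (p : Fin κ → ℝ) (hp : IsPMF p) (hppos : ∀ x, 0 < p x)
    (pc : Fin κ → Fin l → ℝ) (hpc : ∀ y, IsPMF (pc y))
    (hpcpos : ∀ y, 0 < ∑ b, pc y b * (Matrix.trace (Ym y b)).re) :
    ((∀ η : Mat d, IsState η → ∀ y, 0 ≤ GyE Yr Ym p y η ∧ GyE Yr Ym p y η ≤ 1 / 2) ∧
      (∀ y b, IsSubchannel (exclPsi Yr Ym p pc y b)) ∧
      (∀ y, IsInstrument (exclPsi Yr Ym p pc y)) ∧
      IsGame p (exclPsi Yr Ym p pc)) ∧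
    betaConst Yr Ym p ≤
      Ebest p (exclPsi Yr Ym p pc) (freeStates 𝓕) (𝔽 l κ) := by
  classical
  obtain ⟨σ0, hσ0⟩ := h𝓕.2.2.2.2
  have hσ0state : IsState σ0 := ⟨h𝓕.1 σ0 hσ0.1, hσ0.2⟩
  obtain ⟨N0, hN0⟩ := h𝔽ne
  have hκ : 0 < κ := by
    rcases Nat.eq_zero_or_pos κ with h | h
    · exfalso; have := hp.2; subst h; simp at this
    · exact h
  set β := betaConst Yr Ym p with hβdef
  set Op := opNormPSD Yr with hOpdef
  set T : Fin κ → ℝ := fun y => ∑ a, (Matrix.trace (Ym y a)).re with hTdef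
  set S : ℝ := ∑ x, ∑ a, (Matrix.trace (Ym x a)).re / p x with hSdef
  set cE : Fin κ → ℝ := fun y => ∑ b, pc y b * (Matrix.trace (Ym y b)).re with hcdef
  have hTy : ∀ y, (∑ a, (Matrix.trace (Ym y a)).re) = T y := fun _ => rfl
  have hm_nn : ∀ y a, 0 ≤ (Matrix.trace (Ym y a)).re := fun y a => psd_trace_nonneg (hYm y a)
  have hT_nn : ∀ y, 0 ≤ T y := fun y => Finset.sum_nonneg fun a _ => hm_nn y a
  have hm_le_T : ∀ y a, (Matrix.trace (Ym y a)).re ≤ T y := fun y a =>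
    Finset.single_le_sum (fun a _ => hm_nn y a) (Finset.mem_univ a)
  have hOp1 : 1 ≤ Op := le_trans (hYrF σ0 hσ0) (le_opNormPSD hYr hσ0state)
  have hOppos : 0 < Op := lt_of_lt_of_le one_pos hOp1
  have hSalt : S = ∑ x, T x / p x := by
    refine Finset.sum_congr rfl fun x _ => ?_
    rw [Finset.sum_div]
  have hc_le_T : ∀ y, cE y ≤ T y := by
    intro y
    refine Finset.sum_le_sum fun b _ => ?_
    have hpc1 : pc y b ≤ 1 := by
      have := Finset.single_le_sum (fun b _ => (hpc y).1 b) (Finset.mem_univ b)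
      rw [(hpc y).2] at this; exact this
    nlinarith [hm_nn y b, (hpc y).1 b]
  have hS_pos : 0 < S := by
    rw [hSalt]
    refine Finset.sum_pos' (fun x _ => div_nonneg (hT_nn x) (hppos x).le) ?_
    refine ⟨⟨0, hκ⟩, Finset.mem_univ _, ?_⟩
    have := lt_of_lt_of_le (hpcpos ⟨0, hκ⟩) (hc_le_T ⟨0, hκ⟩)
    exact div_pos this (hppos _)
  have hβeq : β = (2 * Op * S)⁻¹ := rfl
  have hβpos : 0 < β := by rw [hβeq]; positivity
  have hTS : ∀ y, T y / p y ≤ S := by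
    intro y
    rw [hSalt]
    exact Finset.single_le_sum (fun x _ => div_nonneg (hT_nn x) (hppos x).le)
      (Finset.mem_univ y)
  have hβOpS : β * Op * S = 1 / 2 := by
    rw [hβeq]; field_simp
  have hhalf : ∀ y, β * Op * (T y / p y) ≤ 1 / 2 := by
    intro y
    rw [← hβOpS]
    exact mul_le_mul_of_nonneg_left (hTS y) (by positivity)
  -- G bounds
  have hG : ∀ η : Mat d, IsState η → ∀ y,
      0 ≤ GyE Yr Ym p y η ∧ GyE Yr Ym p y η ≤ 1 / 2 := by
    intro η hη y
    have hR_nn : 0 ≤ (Matrix.trace (Yr * η)).re := trace_mul_psd_nonneg hYr hη.1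
    have hRle : (Matrix.trace (Yr * η)).re ≤ Op := le_opNormPSD hYr hη
    constructor
    · unfold GyE
      exact div_nonneg (mul_nonneg (mul_nonneg hβpos.le hR_nn) (hT_nn y)) (hppos y).le
    · unfold GyE
      calc betaConst Yr Ym p * (Matrix.trace (Yr * η)).re * (∑ a, (Matrix.trace (Ym y a)).re) / p y
          = β * ((Matrix.trace (Yr * η)).re * (T y / p y)) := by
            rw [hβdef, hTdef]; ring
        _ ≤ β * (Op * (T y / p y)) := by
            refine mul_le_mul_of_nonneg_left ?_ hβpos.le
            exact mul_le_mul_of_nonneg_right hRle (div_nonneg (hT_nn y) (hppos y).le)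
        _ = β * Op * (T y / p y) := by ring
        _ ≤ 1 / 2 := hhalf y
  -- xi facts
  have hξpsd : ∀ y, (xiE Ym pc y).PosSemidef := by
    intro y
    unfold xiE
    rw [real_smul_mat]
    refine psd_smul ?_ (inv_nonneg.mpr (hpcpos y).le)
    refine psd_sum _ _ fun b _ => ?_
    rw [real_smul_mat]
    exact psd_smul (hYm y b) ((hpc y).1 b)
  have hξtr : ∀ y, Matrix.trace (xiE Ym pc y) = 1 := by
    intro y
    unfold xiE
    rw [real_smul_mat, Matrix.trace_smul, Matrix.trace_sum]
    have hterm : ∀ b : Fin l, Matrix.trace (pc y b • Ym y b)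
        = ((pc y b * (Matrix.trace (Ym y b)).re : ℝ) : ℂ) := by
      intro b
      rw [real_smul_mat, Matrix.trace_smul, smul_eq_mul, Complex.ofReal_mul]
      congr 1
      exact psd_trace_re_eq (hYm y b)
    rw [Finset.sum_congr rfl fun b _ => hterm b, ← Complex.ofReal_sum, smul_eq_mul,
      ← Complex.ofReal_mul, inv_mul_cancel₀ (hpcpos y).ne']
    simp
  have hRA : ∀ A : Mat d, A.PosSemidef → (Matrix.trace (Yr * A)).re ≤ Op * (Matrix.trace A).re :=
    fun A hA => trace_mul_le_opNorm hYr hA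
  -- subchannels
  have hsub : ∀ y b, IsSubchannel (exclPsi Yr Ym p pc y b) := by
    intro y b
    induction b using Fin.lastCases with
    | last =>
      rw [exclPsi_last]
      constructor
      · intro A hA
        have ht_nn : 0 ≤ (Matrix.trace A).re := psd_trace_nonneg hA
        have hYA_nn : 0 ≤ (Matrix.trace (Yr * A)).re := trace_mul_psd_nonneg hYr hA
        have happ : (funMap 1 (xiE Ym pc y) -
              (↑(betaConst Yr Ym p * (∑ a, (Matrix.trace (Ym y a)).re) / p y) : ℂ) •
                funMap Yr (xiE Ym pc y)) A
            = (((Matrix.trace A).re - β * T y / p y * (Matrix.trace (Yr * A)).re : ℝ) : ℂ) •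
              xiE Ym pc y := by
          simp only [LinearMap.sub_apply, LinearMap.smul_apply, funMap_apply]
          rw [smul_smul, trace_mul_psd_re_eq hYr hA, ← hβdef, hTy y, ← Complex.ofReal_mul,
            one_mul, psd_trace_re_eq hA, ← sub_smul, ← Complex.ofReal_sub]
          simp
        rw [happ]
        refine psd_smul (hξpsd y) ?_
        have hb : β * T y / p y * (Matrix.trace (Yr * A)).re
            ≤ (Matrix.trace A).re := by
          calc β * T y / p y * (Matrix.trace (Yr * A)).re
              ≤ β * T y / p y * (Op * (Matrix.trace A).re) := by
                refine mul_le_mul_of_nonneg_left (hRA A hA) ?_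
                exact div_nonneg (mul_nonneg hβpos.le (hT_nn y)) (hppos y).le
            _ = (Matrix.trace A).re * (β * Op * (T y / p y)) := by
                field_simp
            _ ≤ (Matrix.trace A).re * (1 / 2) :=
                mul_le_mul_of_nonneg_left (hhalf y) ht_nn
            _ ≤ (Matrix.trace A).re := by linarith
        linarith
      · intro A hA
        have ht_nn : 0 ≤ (Matrix.trace A).re := psd_trace_nonneg hA
        have hYA_nn : 0 ≤ (Matrix.trace (Yr * A)).re := trace_mul_psd_nonneg hYr hA
        have happ : (funMap 1 (xiE Ym pc y) -
              (↑(betaConst Yr Ym p * (∑ a, (Matrix.trace (Ym y a)).re) / p y) : ℂ) •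
                funMap Yr (xiE Ym pc y)) A
            = (((Matrix.trace A).re - β * T y / p y * (Matrix.trace (Yr * A)).re : ℝ) : ℂ) •
              xiE Ym pc y := by
          simp only [LinearMap.sub_apply, LinearMap.smul_apply, funMap_apply]
          rw [smul_smul, trace_mul_psd_re_eq hYr hA, ← hβdef, hTy y, ← Complex.ofReal_mul,
            one_mul, psd_trace_re_eq hA, ← sub_smul, ← Complex.ofReal_sub]
          simp
        rw [happ, Matrix.trace_smul, smul_eq_mul, hξtr y, mul_one, Complex.ofReal_re]
        have : 0 ≤ β * T y / p y * (Matrix.trace (Yr * A)).re :=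
          mul_nonneg (div_nonneg (mul_nonneg hβpos.le (hT_nn y)) (hppos y).le) hYA_nn
        linarith
    | cast i =>
      rw [exclPsi_castSucc]
      constructor
      · intro A hA
        have hYA_nn : 0 ≤ (Matrix.trace (Yr * A)).re := trace_mul_psd_nonneg hYr hA
        have happ : ((↑(betaConst Yr Ym p / p y) : ℂ) • funMap Yr (Ym y i)) A
            = ((β / p y * (Matrix.trace (Yr * A)).re : ℝ) : ℂ) • Ym y i := by
          simp only [LinearMap.smul_apply, funMap_apply]
          rw [smul_smul, trace_mul_psd_re_eq hYr hA, ← hβdef, ← Complex.ofReal_mul]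
          simp
        rw [happ]
        refine psd_smul (hYm y i) ?_
        exact mul_nonneg (div_nonneg hβpos.le (hppos y).le) hYA_nn
      · intro A hA
        have ht_nn : 0 ≤ (Matrix.trace A).re := psd_trace_nonneg hA
        have hYA_nn : 0 ≤ (Matrix.trace (Yr * A)).re := trace_mul_psd_nonneg hYr hA
        have happ : ((↑(betaConst Yr Ym p / p y) : ℂ) • funMap Yr (Ym y i)) A
            = ((β / p y * (Matrix.trace (Yr * A)).re : ℝ) : ℂ) • Ym y i := by
          simp only [LinearMap.smul_apply, funMap_apply]
          rw [smul_smul, trace_mul_psd_re_eq hYr hA, ← hβdef, ← Complex.ofReal_mul]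
          simp
        rw [happ, Matrix.trace_smul, smul_eq_mul, psd_trace_re_eq (hYm y i),
          ← Complex.ofReal_mul, Complex.ofReal_re]
        calc β / p y * (Matrix.trace (Yr * A)).re * (Matrix.trace (Ym y i)).re
            ≤ β / p y * (Op * (Matrix.trace A).re) * T y := by
              refine mul_le_mul ?_ (hm_le_T y i) (hm_nn y i) ?_
              · exact mul_le_mul_of_nonneg_left (hRA A hA)
                  (div_nonneg hβpos.le (hppos y).le)
              · exact mul_nonneg (div_nonneg hβpos.le (hppos y).le)
                  (mul_nonneg hOppos.le ht_nn)
          _ = (Matrix.trace A).re * (β * Op * (T y / p y)) := by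
              field_simp
          _ ≤ (Matrix.trace A).re * (1 / 2) :=
              mul_le_mul_of_nonneg_left (hhalf y) ht_nn
          _ ≤ (Matrix.trace A).re := by linarith
  -- trace preservation
  have htp : ∀ y, ∀ A : Mat d, Matrix.trace (∑ b, exclPsi Yr Ym p pc y b A) = Matrix.trace A := by
    intro y A
    rw [Matrix.trace_sum, Fin.sum_univ_castSucc]
    have hterm : ∀ i : Fin l, Matrix.trace (exclPsi Yr Ym p pc y (Fin.castSucc i) A)
        = ((β / p y : ℝ) : ℂ) * Matrix.trace (Yr * A) * ((Matrix.trace (Ym y i)).re : ℂ) := by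
      intro i
      rw [exclPsi_castSucc]
      simp only [LinearMap.smul_apply, funMap_apply]
      rw [Matrix.trace_smul, Matrix.trace_smul, smul_eq_mul, smul_eq_mul,
        psd_trace_re_eq (hYm y i), ← hβdef]
      push_cast
      ring_nf
      simp
    rw [Finset.sum_congr rfl fun i _ => hterm i]
    have hsum1 : ∑ i : Fin l, ((β / p y : ℝ) : ℂ) * Matrix.trace (Yr * A) *
        ((Matrix.trace (Ym y i)).re : ℂ)
        = ((β / p y : ℝ) : ℂ) * Matrix.trace (Yr * A) * ((T y : ℝ) : ℂ) := by
      rw [← Finset.mul_sum, hTdef]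
      push_cast
      ring
    have hlast : Matrix.trace (exclPsi Yr Ym p pc y (Fin.last l) A)
        = Matrix.trace A - ((β * T y / p y : ℝ) : ℂ) * Matrix.trace (Yr * A) := by
      rw [exclPsi_last]
      simp only [LinearMap.sub_apply, LinearMap.smul_apply, funMap_apply]
      rw [Matrix.trace_sub, Matrix.trace_smul, Matrix.trace_smul, Matrix.trace_smul,
        smul_eq_mul, smul_eq_mul, smul_eq_mul, hξtr y, one_mul, ← hβdef, hTy y]
      ring
    rw [hsum1, hlast]
    have : ((β / p y : ℝ) : ℂ) * ((T y : ℝ) : ℂ) = ((β * T y / p y : ℝ) : ℂ) := by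
      push_cast; ring
    rw [show ((β / p y : ℝ) : ℂ) * Matrix.trace (Yr * A) * ((T y : ℝ) : ℂ)
        = ((β / p y : ℝ) : ℂ) * ((T y : ℝ) : ℂ) * Matrix.trace (Yr * A) by ring, this]
    ring
  have hinstr : ∀ y, IsInstrument (exclPsi Yr Ym p pc y) :=
    fun y => ⟨fun b => hsub y b, htp y⟩
  refine ⟨⟨hG, hsub, hinstr, ⟨hp, hppos, hinstr⟩⟩, ?_⟩
  -- Part (ii)
  have hlower : ∀ σ ∈ freeStates 𝓕, ∀ N ∈ 𝔽 l κ,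
      β ≤ PerrE p (exclPsi Yr Ym p pc) σ N := by
    intro σ hσ N hN
    have hσst : IsState σ := ⟨h𝓕.1 σ hσ.1, hσ.2⟩
    have hNpovm : IsPOVMSet N := (h𝔽 l κ).1 N hN
    set R := (Matrix.trace (Yr * σ)).re with hRdef
    have hR1 : 1 ≤ R := hYrF σ hσ
    have hR0 : 0 ≤ R := le_trans zero_le_one hR1
    obtain ⟨Nx, hNx⟩ := simulable_extend hNpovm hκ
    refine le_csInf ⟨_, Nx, hNx, rfl⟩ ?_
    rintro v ⟨N', hsim', rfl⟩
    obtain ⟨nz, q, r, s, hq, hr, hs, hform⟩ := hsim'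
    have hN'psd : ∀ y b, (N' y b).PosSemidef := by
      intro y b
      rw [hform y b]
      refine psd_sum _ _ fun z _ => ?_
      refine psd_sum _ _ fun x _ => ?_
      refine psd_sum _ _ fun a _ => ?_
      rw [real_smul_mat]
      exact psd_smul (hNpovm.1 x a)
        (mul_nonneg (mul_nonneg (hq.1 z) ((hr y z).1 x)) ((hs y z a).1 b))
    -- merged POVM set
    set Ntil : Fin κ → Fin l → Mat d :=
      fun y a => N' y (Fin.castSucc a) + pc y a • N' y (Fin.last l) with hNtil
    have hNtilsim : Simulable Ntil N := by
      refine ⟨nz, q, r,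
        fun y z a a' => s y z a (Fin.castSucc a') + pc y a' * s y z a (Fin.last l),
        hq, hr, ?_, ?_⟩
      · intro y z a
        constructor
        · intro a'
          exact add_nonneg ((hs y z a).1 _) (mul_nonneg ((hpc y).1 a') ((hs y z a).1 _))
        · rw [Finset.sum_add_distrib, ← Finset.sum_mul, (hpc y).2, one_mul]
          have h2 := (hs y z a).2
          rw [Fin.sum_univ_castSucc] at h2
          linarith
      · intro y a'
        show N' y (Fin.castSucc a') + pc y a' • N' y (Fin.last l) = _
        rw [hform, hform, Finset.smul_sum, ← Finset.sum_add_distrib]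
        refine Finset.sum_congr rfl fun z _ => ?_
        rw [Finset.smul_sum, ← Finset.sum_add_distrib]
        refine Finset.sum_congr rfl fun x _ => ?_
        rw [Finset.smul_sum, ← Finset.sum_add_distrib]
        refine Finset.sum_congr rfl fun a _ => ?_
        rw [smul_smul, ← add_smul]
        congr 1
        ring
    have hNtilF : Ntil ∈ 𝔽 l κ := h𝔽sim N Ntil hN hNtilsim
    have hY1 := hYmF Ntil hNtilF
    set t : Fin κ → ℝ := fun y => (Matrix.trace (N' y (Fin.last l) * xiE Ym pc y)).re with htdef
    have ht_nn : ∀ y, 0 ≤ t y := fun y => trace_mul_psd_nonneg (hN'psd y _) (hξpsd y)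
    -- c x * t x identity
    have hct : ∀ x, cE x * t x = ∑ b, pc x b * (Matrix.trace (Ym x b * N' x (Fin.last l))).re := by
      intro x
      have hξ : xiE Ym pc x = (((cE x)⁻¹ : ℝ) : ℂ) • ∑ b, ((pc x b : ℝ) : ℂ) • Ym x b := by
        unfold xiE
        rw [real_smul_mat]
        congr 1
      have hmul : Matrix.trace (N' x (Fin.last l) * xiE Ym pc x)
          = (((cE x)⁻¹ : ℝ) : ℂ) * ∑ b, ((pc x b : ℝ) : ℂ) * Matrix.trace (N' x (Fin.last l) * Ym x b) := by
        rw [hξ, Matrix.mul_smul, Matrix.trace_smul, smul_eq_mul, Matrix.mul_sum,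
          Matrix.trace_sum]
        congr 1
        refine Finset.sum_congr rfl fun b _ => ?_
        rw [Matrix.mul_smul, Matrix.trace_smul, smul_eq_mul]
      have hre : t x = (cE x)⁻¹ * ∑ b, pc x b * (Matrix.trace (N' x (Fin.last l) * Ym x b)).re := by
        rw [htdef]
        simp only
        rw [hmul, Complex.re_ofReal_mul]
        congr 1
        rw [Complex.re_sum]
        exact Finset.sum_congr rfl fun b _ => Complex.re_ofReal_mul _ _
      rw [hre, ← mul_assoc, mul_inv_cancel₀ (hpcpos x).ne', one_mul]
      exact Finset.sum_congr rfl fun b _ => by rw [Matrix.trace_mul_comm]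
    -- decompose hY1
    have hdec : ∀ x a, (Matrix.trace (Ym x a * Ntil x a)).re
        = (Matrix.trace (Ym x a * N' x (Fin.castSucc a))).re
          + pc x a * (Matrix.trace (Ym x a * N' x (Fin.last l))).re := by
      intro x a
      rw [hNtil]
      simp only
      rw [Matrix.mul_add, Matrix.trace_add, real_smul_mat, Matrix.mul_smul,
        Matrix.trace_smul, smul_eq_mul]
      rw [Complex.add_re, Complex.re_ofReal_mul]
    have hY2 : 1 ≤ (∑ x, ∑ a, (Matrix.trace (Ym x a * N' x (Fin.castSucc a))).re)
        + ∑ x, cE x * t x := by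
      calc (1 : ℝ) ≤ ∑ x, ∑ a, (Matrix.trace (Ym x a * Ntil x a)).re := hY1
        _ = ∑ x, ∑ a, ((Matrix.trace (Ym x a * N' x (Fin.castSucc a))).re
              + pc x a * (Matrix.trace (Ym x a * N' x (Fin.last l))).re) := by
            exact Finset.sum_congr rfl fun x _ => Finset.sum_congr rfl fun a _ => hdec x a
        _ = (∑ x, ∑ a, (Matrix.trace (Ym x a * N' x (Fin.castSucc a))).re)
              + ∑ x, ∑ a, pc x a * (Matrix.trace (Ym x a * N' x (Fin.last l))).re := by
            rw [← Finset.sum_add_distrib]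
            exact Finset.sum_congr rfl fun x _ => Finset.sum_add_distrib
        _ = _ := by
            congr 1
            exact Finset.sum_congr rfl fun x _ => (hct x).symm
    -- evaluate the game value
    set g : Fin κ → ℝ := fun y => β * R * T y / p y with hgdef
    have hg_half : ∀ y, g y ≤ 1 / 2 := fun y => (hG σ hσst y).2
    have hg_nn : ∀ y, 0 ≤ g y := fun y => (hG σ hσst y).1
    have hterm1 : ∀ y (i : Fin l),
        p y * (Matrix.trace (N' y (Fin.castSucc i) * exclPsi Yr Ym p pc y (Fin.castSucc i) σ)).re
          = β * R * (Matrix.trace (Ym y i * N' y (Fin.castSucc i))).re := by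
      intro y i
      rw [exclPsi_castSucc]
      simp only [LinearMap.smul_apply, funMap_apply]
      rw [smul_smul, trace_mul_psd_re_eq hYr hσst.1, ← hβdef, ← hRdef, ← Complex.ofReal_mul,
        Matrix.mul_smul, Matrix.trace_smul, smul_eq_mul, Complex.re_ofReal_mul,
        Matrix.trace_mul_comm]
      have hpy : p y ≠ 0 := (hppos y).ne'
      field_simp
    have hterm2 : ∀ y,
        p y * (Matrix.trace (N' y (Fin.last l) * exclPsi Yr Ym p pc y (Fin.last l) σ)).re
          = p y * ((1 - g y) * t y) := by
      intro y
      rw [exclPsi_last]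
      have happ : (funMap 1 (xiE Ym pc y) -
            (↑(betaConst Yr Ym p * (∑ a, (Matrix.trace (Ym y a)).re) / p y) : ℂ) •
              funMap Yr (xiE Ym pc y)) σ
          = ((1 - g y : ℝ) : ℂ) • xiE Ym pc y := by
        simp only [LinearMap.sub_apply, LinearMap.smul_apply, funMap_apply]
        rw [smul_smul, trace_mul_psd_re_eq hYr hσst.1, ← hβdef, hTy y, ← hRdef,
          ← Complex.ofReal_mul, one_mul, hσst.2, ← sub_smul]
        congr 1
        have hpy : p y ≠ 0 := (hppos y).ne'
        simp only [hgdef]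
        push_cast
        field_simp
      rw [happ, Matrix.mul_smul, Matrix.trace_smul, smul_eq_mul, Complex.re_ofReal_mul]
    have hGV : gameValue p (exclPsi Yr Ym p pc) σ N'
        = β * R * (∑ y, ∑ i, (Matrix.trace (Ym y i * N' y (Fin.castSucc i))).re)
          + ∑ y, p y * ((1 - g y) * t y) := by
      unfold gameValue
      have hy : ∀ y, ∑ b, p y * (Matrix.trace (N' y b * exclPsi Yr Ym p pc y b σ)).re
          = β * R * (∑ i, (Matrix.trace (Ym y i * N' y (Fin.castSucc i))).re)
            + p y * ((1 - g y) * t y) := by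
        intro y
        rw [Fin.sum_univ_castSucc, hterm2 y, Finset.mul_sum]
        congr 1
        exact Finset.sum_congr rfl fun i _ => hterm1 y i
      rw [Finset.sum_congr rfl fun y _ => hy y, Finset.sum_add_distrib, ← Finset.mul_sum]
    have hbracket : ∀ y, β * R * (cE y * t y) ≤ p y * ((1 - g y) * t y) := by
      intro y
      have h1 : β * R * cE y ≤ p y * (1 - g y) := by
        have h2 : β * R * cE y ≤ β * R * T y :=
          mul_le_mul_of_nonneg_left (hc_le_T y) (mul_nonneg hβpos.le hR0)
        have h3 : β * R * T y = p y * g y := by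
          have hpy : p y ≠ 0 := (hppos y).ne'
          simp only [hgdef]
          field_simp
        have h4 : p y * g y ≤ p y * (1 - g y) := by
          have := hg_half y
          nlinarith [hppos y]
        linarith
      calc β * R * (cE y * t y) = (β * R * cE y) * t y := by ring
        _ ≤ (p y * (1 - g y)) * t y := mul_le_mul_of_nonneg_right h1 (ht_nn y)
        _ = p y * ((1 - g y) * t y) := by ring
    calc β ≤ β * R := le_mul_of_one_le_right hβpos.le hR1
      _ ≤ β * R * ((∑ y, ∑ i, (Matrix.trace (Ym y i * N' y (Fin.castSucc i))).re)
            + ∑ y, cE y * t y) := le_mul_of_one_le_right (mul_nonneg hβpos.le hR0) hY2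
      _ = β * R * (∑ y, ∑ i, (Matrix.trace (Ym y i * N' y (Fin.castSucc i))).re)
            + ∑ y, β * R * (cE y * t y) := by
          rw [mul_add]
          congr 1
          rw [Finset.mul_sum]
      _ ≤ β * R * (∑ y, ∑ i, (Matrix.trace (Ym y i * N' y (Fin.castSucc i))).re)
            + ∑ y, p y * ((1 - g y) * t y) :=
          add_le_add le_rfl (Finset.sum_le_sum fun y _ => hbracket y)
      _ = gameValue p (exclPsi Yr Ym p pc) σ N' := hGV.symm
  refine le_csInf ⟨_, σ0, N0, hσ0, hN0, rfl⟩ ?_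
  rintro v ⟨σ, N, hσ, hN, rfl⟩
  exact hlower σ hσ N hN

end MultiObject
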